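/- Let M be a finite-dimensional Ŷ_{r,n}^K-module and fix an index i with 1 ≤ i ≤ n. If every eigenvalue of the action of X_i on M lies in the set I = {q^m : m ∈ ℤ}, then M is integral; that is, for every 1 ≤ k ≤ n, every eigenvalue of the action of X_k on M lies in I. -/

import Mathlib

/- Common setup: the affine Yokonuma-Hecke algebra presented by generators and
relations, reduced words, Bruhat order, affine Hecke algebras (of tensor-product
type), isotypic components and induced modules. -/

set_option maxHeartbeats 1000000

open scoped TensorProduct

noncomputable section

namespace YH

/-- Generators of the affine Yokonuma-Hecke algebra: `t j` for `j : Fin n`,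
`g i` (for `i` with `i+1 < n`, representing the transposition `(i, i+1)` in
0-based indexing), and `X1`, `X1inv` (the generator `X_1` and its inverse). -/
inductive YGen (n : ℕ) : Type
  | t (j : Fin n) : YGen n
  | g (i : ℕ) (h : i + 1 < n) : YGen n
  | X1 : YGen n
  | X1inv : YGen n

variable (K : Type) [Field K] (r n : ℕ) (q : K)

/-- The free algebra on the generators. -/
abbrev FY := FreeAlgebra K (YGen n)

def tF (j : Fin n) : FY K n := FreeAlgebra.ι K (YGen.t j)
def gF (i : ℕ) (h : i + 1 < n) : FY K n := FreeAlgebra.ι K (YGen.g i h)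
def X1F : FY K n := FreeAlgebra.ι K YGen.X1
def X1invF : FY K n := FreeAlgebra.ι K YGen.X1inv

/-- The idempotent `e_i = (1/r) ∑_{s=0}^{r-1} t_i^s t_{i+1}^{-s}` (as an element
of the free algebra, with `t_{i+1}^{-s}` written as `t_{i+1}^{(r-s) % r}`,
using `t^r = 1`). -/
def eF (i : ℕ) (h : i + 1 < n) : FY K n :=
  (r : K)⁻¹ • ∑ s ∈ Finset.range r,
    tF K n ⟨i, by omega⟩ ^ s * tF K n ⟨i + 1, h⟩ ^ ((r - s) % r)

/-- The simple transposition `s_i = (i, i+1)` of `Fin n` (0-based). -/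
def swapi (i : ℕ) (h : i + 1 < n) : Equiv.Perm (Fin n) :=
  Equiv.swap ⟨i, by omega⟩ ⟨i + 1, h⟩

/-- Defining relations of the affine Yokonuma-Hecke algebra `Ŷ_{r,n}(q)` over `K`. -/
inductive YRel : FY K n → FY K n → Prop
  | gg {i j : ℕ} (hi : i + 1 < n) (hj : j + 1 < n) (hij : i + 2 ≤ j ∨ j + 2 ≤ i) :
      YRel (gF K n i hi * gF K n j hj) (gF K n j hj * gF K n i hi)
  | braid {i : ℕ} (h : i + 2 < n) :
      YRel (gF K n i (by omega) * gF K n (i + 1) h * gF K n i (by omega))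
        (gF K n (i + 1) h * gF K n i (by omega) * gF K n (i + 1) h)
  | tt (i j : Fin n) : YRel (tF K n i * tF K n j) (tF K n j * tF K n i)
  | gt {i : ℕ} (hi : i + 1 < n) (j : Fin n) :
      YRel (gF K n i hi * tF K n j) (tF K n (swapi n i hi j) * gF K n i hi)
  | tr (j : Fin n) : YRel (tF K n j ^ r) 1
  | gsq {i : ℕ} (hi : i + 1 < n) :
      YRel (gF K n i hi * gF K n i hi)
        (1 + (q - q⁻¹) • (eF K r n i hi * gF K n i hi))
  | XXinv : YRel (X1F K n * X1invF K n) 1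
  | XinvX : YRel (X1invF K n * X1F K n) 1
  | gXgX (h : 1 < n) :
      YRel (gF K n 0 (by omega) * X1F K n * gF K n 0 (by omega) * X1F K n)
        (X1F K n * gF K n 0 (by omega) * X1F K n * gF K n 0 (by omega))
  | gX {i : ℕ} (hi : i + 1 < n) (h1 : 1 ≤ i) :
      YRel (gF K n i hi * X1F K n) (X1F K n * gF K n i hi)
  | tX (j : Fin n) : YRel (tF K n j * X1F K n) (X1F K n * tF K n j)

/-- The affine Yokonuma-Hecke algebra `Ŷ_{r,n}^K`. -/
abbrev Y := RingQuot (YRel K r n q)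

def mkY : FY K n →ₐ[K] Y K r n q := RingQuot.mkAlgHom K (YRel K r n q)

/-- The generator `t_j` (0-based `j`). -/
def t (j : Fin n) : Y K r n q := mkY K r n q (tF K n j)
/-- The generator `g_i` (0-based `i`, `i+1 < n`). -/
def g (i : ℕ) (h : i + 1 < n) : Y K r n q := mkY K r n q (gF K n i h)
/-- The idempotent `e_i`. -/
def e (i : ℕ) (h : i + 1 < n) : Y K r n q := mkY K r n q (eF K r n i h)
def X1 : Y K r n q := mkY K r n q (X1F K n)
def X1inv : Y K r n q := mkY K r n q (X1invF K n)

/-- `X_{i+1} := g_i X_i g_i`, recursively. -/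
def Xrec : (k : ℕ) → k < n → Y K r n q
  | 0, _ => X1 K r n q
  | k + 1, h => g K r n q k (by omega) * Xrec k (by omega) * g K r n q k (by omega)

/-- The commuting elements `X_j` (0-based `j`). -/
def X (j : Fin n) : Y K r n q := Xrec K r n q j.1 j.2

/-! ### Words and reduced expressions -/

/-- A word in the simple transpositions. -/
abbrev Word := List {i : ℕ // i + 1 < n}

/-- The permutation represented by a word. -/
def permOfWord (l : Word n) : Equiv.Perm (Fin n) :=
  (l.map fun i => swapi n i.1 i.2).prod

/-- `l` is a reduced word for `w`. -/
def IsReducedWord (l : Word n) (w : Equiv.Perm (Fin n)) : Prop :=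
  permOfWord n l = w ∧ ∀ l' : Word n, permOfWord n l' = w → l.length ≤ l'.length

/-- The product `g_{i_1} ⋯ g_{i_k}` along a word. -/
def gword (l : Word n) : Y K r n q := (l.map fun i => g K r n q i.1 i.2).prod

/-- `gw` is the family `w ↦ g_w`, i.e. `g_w` is the product of the `g_i` along
any reduced expression of `w` (well defined by Matsumoto's lemma). -/
def GwSpec (gw : Equiv.Perm (Fin n) → Y K r n q) : Prop :=
  ∀ (w : Equiv.Perm (Fin n)) (l : Word n), IsReducedWord n l w → gw w = gword K r n q l

/-- Bruhat order: `u ≤ w` iff some reduced word of `w` has a subword which is a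
reduced word of `u`. -/
def BruhatLE (u w : Equiv.Perm (Fin n)) : Prop :=
  ∃ l : Word n, IsReducedWord n l w ∧ ∃ l' : Word n, l'.Sublist l ∧ IsReducedWord n l' u

def BruhatLT (u w : Equiv.Perm (Fin n)) : Prop := BruhatLE n u w ∧ u ≠ w

/-! ### Monomials and distinguished subalgebras -/

/-- `XU` is a family of units lifting the commuting elements `X_j` (each `X_j`
is invertible in `Ŷ_{r,n}^K`). -/
def XUSpec (XU : Fin n → (Y K r n q)ˣ) : Prop :=
  ∀ j, (XU j : Y K r n q) = X K r n q j

/-- The monomial `X^α = X_1^{α_1} ⋯ X_n^{α_n}`, `α ∈ ℤ^n`. -/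
def Xpow (XU : Fin n → (Y K r n q)ˣ) (α : Fin n → ℤ) : Y K r n q :=
  ((List.finRange n).map fun j => ((XU j ^ α j : (Y K r n q)ˣ) : Y K r n q)).prod

/-- The monomial `t^β = t_1^{β_1} ⋯ t_n^{β_n}`, `β ∈ (ℤ/rℤ)^n`. -/
def tpow (β : Fin n → ZMod r) : Y K r n q :=
  ((List.finRange n).map fun j => t K r n q j ^ (β j).val).prod

/-- The subalgebra `KT` generated by `t_1, …, t_n` (the group algebra of
`T = (ℤ/rℤ)^n`). -/
def KT : Subalgebra K (Y K r n q) := Algebra.adjoin K (Set.range (t K r n q))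

/-- The Laurent polynomial subalgebra `P_n^K` generated by `X_1^{±1}, …, X_n^{±1}`. -/
def Pn (XU : Fin n → (Y K r n q)ˣ) : Subalgebra K (Y K r n q) :=
  Algebra.adjoin K
    ((Set.range fun j => ((XU j : (Y K r n q)ˣ) : Y K r n q)) ∪
      (Set.range fun j => (((XU j)⁻¹ : (Y K r n q)ˣ) : Y K r n q)))

/-- The subalgebra `P_n^K(T)` generated by `t_1, …, t_n` and `X_1^{±1}, …, X_n^{±1}`. -/
def PT (XU : Fin n → (Y K r n q)ˣ) : Subalgebra K (Y K r n q) :=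
  Algebra.adjoin K
    (Set.range (t K r n q) ∪
      (Set.range fun j => ((XU j : (Y K r n q)ˣ) : Y K r n q)) ∪
      (Set.range fun j => (((XU j)⁻¹ : (Y K r n q)ˣ) : Y K r n q)))

/-- The subalgebra of `Ŷ_{r,n}^K` generated by all `t_j`, all `X_j^{±1}`, and the
`g_w` for `w` in a set `W` of permutations (e.g. a Young subgroup). -/
def Ysub (XU : Fin n → (Y K r n q)ˣ) (gw : Equiv.Perm (Fin n) → Y K r n q)
    (W : Set (Equiv.Perm (Fin n))) : Subalgebra K (Y K r n q) :=
  Algebra.adjoin K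
    (Set.range (t K r n q) ∪
      (Set.range fun j => ((XU j : (Y K r n q)ˣ) : Y K r n q)) ∪
      (Set.range fun j => (((XU j)⁻¹ : (Y K r n q)ˣ) : Y K r n q)) ∪
      (gw '' W))

/-- The Young subgroup `S_μ` attached to a block function `c : Fin n → Fin r`
(for monotone `c`, this is the Young subgroup of the composition `μ` whose
parts are the fiber sizes of `c`): permutations preserving the blocks. -/
def Smu (c : Fin n → Fin r) : Set (Equiv.Perm (Fin n)) :=
  {w : Equiv.Perm (Fin n) | ∀ j, c (w j) = c j}

/-- Permutations fixing all positions `≥ m` (the subgroup `S_m ⊆ S_n`). -/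
def SFix (m : ℕ) : Set (Equiv.Perm (Fin n)) :=
  {w : Equiv.Perm (Fin n) | ∀ j : Fin n, m ≤ j.1 → w j = j}

/-! ### Isotypic components -/

section Modules

variable (M : Type) [AddCommGroup M] [Module K M] [Module (Y K r n q) M]
  [IsScalarTower K (Y K r n q) M]

/-- The `V(μ)`-isotypic component of `M` as a `KT`-module: since `V(μ)` is the
one-dimensional `KT`-module on which `t_j` acts by the scalar `ζ^{c j}`, this is
the simultaneous eigenspace. Here `ζ` is a primitive `r`-th root of unity and
the simple `K(ℤ/rℤ)`-modules are `V_k : t ↦ ζ^{k}`, `k : Fin r`. -/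
def Imu (ζ : K) (c : Fin n → Fin r) : Submodule K M where
  carrier := {m : M | ∀ j : Fin n, t K r n q j • m = ζ ^ ((c j : ℕ)) • m}
  add_mem' := by
    intro a b ha hb
    intro j
    rw [smul_add, ha j, hb j, smul_add]
  zero_mem' := by intro j; simp
  smul_mem' := by
    intro k m hm
    intro j
    rw [smul_comm, hm j, smul_comm]

/-- `M_μ := ∑_{w ∈ S_n} g_w (I_μ M)`. -/
def Mmu (ζ : K) (c : Fin n → Fin r) (gw : Equiv.Perm (Fin n) → Y K r n q) :
    Submodule K M :=
  Submodule.span K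
    {x : M | ∃ w : Equiv.Perm (Fin n), ∃ m ∈ Imu K r n q M ζ c, x = gw w • m}

end Modules

/-! ### Affine Hecke algebras of type A (tensor-product form)

`HH K q n r c` is the tensor product `Ĥ_{μ_1}^K ⊗ ⋯ ⊗ Ĥ_{μ_r}^K` of affine Hecke
algebras, presented globally: generators `T_i` for those adjacencies `i, i+1`
lying in a common block of `c : Fin n → Fin r`, and invertible `Y_j` for all
`j`.  (For `r = 1` and `c` constant this is the affine Hecke algebra `Ĥ_n^K`.) -/

inductive HGen (n r : ℕ) (c : Fin n → Fin r) : Type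
  | T (i : ℕ) (h : i + 1 < n) (hc : c ⟨i, by omega⟩ = c ⟨i + 1, h⟩) : HGen n r c
  | Y (j : Fin n) : HGen n r c
  | Yinv (j : Fin n) : HGen n r c

end YH

namespace YH

variable (K : Type) [Field K] (q : K) {n r : ℕ}

abbrev FH (c : Fin n → Fin r) := FreeAlgebra K (HGen n r c)

def TFh (c : Fin n → Fin r) (i : ℕ) (h : i + 1 < n)
    (hc : c ⟨i, by omega⟩ = c ⟨i + 1, h⟩) : FH K c :=
  FreeAlgebra.ι K (HGen.T i h hc)
def YFh (c : Fin n → Fin r) (j : Fin n) : FH K c := FreeAlgebra.ι K (HGen.Y j)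
def YinvFh (c : Fin n → Fin r) (j : Fin n) : FH K c := FreeAlgebra.ι K (HGen.Yinv j)

/-- Defining relations of the (tensor product of) affine Hecke algebra(s). -/
inductive HRel (c : Fin n → Fin r) : FH K c → FH K c → Prop
  | quad {i : ℕ} (h : i + 1 < n) (hc : c ⟨i, by omega⟩ = c ⟨i + 1, h⟩) :
      HRel c ((TFh K c i h hc - algebraMap K (FH K c) q) *
          (TFh K c i h hc + algebraMap K (FH K c) q⁻¹)) 0
  | braid {i : ℕ} (h : i + 2 < n)
      (hc1 : c ⟨i, by omega⟩ = c ⟨i + 1, by omega⟩)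
      (hc2 : c ⟨i + 1, by omega⟩ = c ⟨i + 2, h⟩) :
      HRel c
        (TFh K c i (by omega) hc1 * TFh K c (i + 1) (by omega) hc2 *
          TFh K c i (by omega) hc1)
        (TFh K c (i + 1) (by omega) hc2 * TFh K c i (by omega) hc1 *
          TFh K c (i + 1) (by omega) hc2)
  | TT {i j : ℕ} (hi : i + 1 < n) (hci : c ⟨i, by omega⟩ = c ⟨i + 1, hi⟩)
      (hj : j + 1 < n) (hcj : c ⟨j, by omega⟩ = c ⟨j + 1, hj⟩)
      (hij : i + 2 ≤ j ∨ j + 2 ≤ i) :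
      HRel c (TFh K c i hi hci * TFh K c j hj hcj)
        (TFh K c j hj hcj * TFh K c i hi hci)
  | YY (j k : Fin n) : HRel c (YFh K c j * YFh K c k) (YFh K c k * YFh K c j)
  | YYinv (j : Fin n) : HRel c (YFh K c j * YinvFh K c j) 1
  | YinvY (j : Fin n) : HRel c (YinvFh K c j * YFh K c j) 1
  | TYT {i : ℕ} (h : i + 1 < n) (hc : c ⟨i, by omega⟩ = c ⟨i + 1, h⟩) :
      HRel c (TFh K c i h hc * YFh K c ⟨i, by omega⟩ * TFh K c i h hc)
        (YFh K c ⟨i + 1, h⟩)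
  | TY {i : ℕ} (h : i + 1 < n) (hc : c ⟨i, by omega⟩ = c ⟨i + 1, h⟩)
      (j : Fin n) (hj1 : j.1 ≠ i) (hj2 : j.1 ≠ i + 1) :
      HRel c (TFh K c i h hc * YFh K c j) (YFh K c j * TFh K c i h hc)

/-- The algebra `Ĥ_{μ_1}^K ⊗ ⋯ ⊗ Ĥ_{μ_r}^K` (for `c` monotone with fiber sizes
`μ_k`); for `r = 1` it is the affine Hecke algebra `Ĥ_n^K` of type `A`. -/
abbrev HH (c : Fin n → Fin r) := RingQuot (HRel K q c)

def mkH (c : Fin n → Fin r) : FH K c →ₐ[K] HH K q c := RingQuot.mkAlgHom K (HRel K q c)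

/-- The generator `T_i` (for an adjacency internal to a block of `c`). -/
def Tg (c : Fin n → Fin r) (i : ℕ) (h : i + 1 < n)
    (hc : c ⟨i, by omega⟩ = c ⟨i + 1, h⟩) : HH K q c :=
  mkH K q c (TFh K c i h hc)
/-- The generator `Y_j`. -/
def Yg (c : Fin n → Fin r) (j : Fin n) : HH K q c := mkH K q c (YFh K c j)
/-- The generator `Y_j^{-1}`. -/
def Yinvg (c : Fin n → Fin r) (j : Fin n) : HH K q c := mkH K q c (YinvFh K c j)

end YH

namespace YH

variable (K : Type) [Field K] (r n : ℕ) (q : K)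

/-! ### Actions and induced modules -/

/-- The action of an algebra `R` on a module `M` as an algebra homomorphism
`R →ₐ[K] End_K(M)`. -/
def actHom (R : Type) [Ring R] [Algebra K R] (M : Type) [AddCommGroup M] [Module K M]
    [Module R M] [IsScalarTower K R M] : R →ₐ[K] Module.End K M where
  toFun a :=
    { toFun := fun m => a • m
      map_add' := fun x y => smul_add a x y
      map_smul' := fun k m => (smul_comm k a m).symm }
  map_one' := by ext m; exact one_smul R m
  map_mul' a b := by ext m; exact mul_smul a b m
  map_zero' := by ext m; exact zero_smul R m
  map_add' a b := by ext m; exact add_smul a b m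
  commutes' k := by
    ext m
    simp [Module.algebraMap_end_apply, algebraMap_smul]

/-- A `K`-space `P` with action `ρ` of an algebra `R` is "simple" if it is
nonzero and has no proper nonzero `ρ`-stable subspace. -/
def SimpleVia {R : Type} [Ring R] [Algebra K R] {P : Type} [AddCommGroup P] [Module K P]
    (ρ : R →ₐ[K] Module.End K P) : Prop :=
  Nontrivial P ∧
    ∀ Q : Submodule K P, (∀ h : R, ∀ v ∈ Q, ρ h v ∈ Q) → Q = ⊥ ∨ Q = ⊤

/-- The relation submodule defining the induced module
`Ŷ_{r,n}^K ⊗_{Ŷ_{r,μ}^K} (V(μ) ⊗ P)`, where `P` is a module over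
`Ĥ_{μ_1}^K ⊗ ⋯ ⊗ Ĥ_{μ_r}^K` (given by `ρ`), and `V(μ)` is the one-dimensional
`KT`-module attached to `c` (and a primitive `r`-th root of unity `ζ`):
we quotient `Ŷ_{r,n}^K ⊗_K P` by the `Ŷ`-span of the relations
`t_j ⊗ p = ζ^{c j} (1 ⊗ p)`, `g_i ⊗ p = 1 ⊗ T_i p` (`i` internal), and
`X_j ⊗ p = 1 ⊗ Y_j p`. -/
def IndRel (ζ : K) (c : Fin n → Fin r) (P : Type) [AddCommGroup P] [Module K P]
    (ρ : HH K q c →ₐ[K] Module.End K P) :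
    Submodule (Y K r n q) (Y K r n q ⊗[K] P) :=
  Submodule.span (Y K r n q)
    ({z : Y K r n q ⊗[K] P | ∃ (j : Fin n) (p : P),
        z = t K r n q j ⊗ₜ[K] p - (1 : Y K r n q) ⊗ₜ[K] (ζ ^ ((c j : ℕ)) • p)} ∪
      {z | ∃ (i : ℕ) (hi : i + 1 < n) (hc : c ⟨i, by omega⟩ = c ⟨i + 1, hi⟩) (p : P),
        z = g K r n q i hi ⊗ₜ[K] p - (1 : Y K r n q) ⊗ₜ[K] (ρ (Tg K q c i hi hc) p)} ∪
      {z | ∃ (j : Fin n) (p : P),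
        z = X K r n q j ⊗ₜ[K] p - (1 : Y K r n q) ⊗ₜ[K] (ρ (Yg K q c j) p)})

/-- The induced `Ŷ_{r,n}^K`-module `S_μ(L.) = Ŷ_{r,n}^K ⊗_{Ŷ_{r,μ}^K} (V(μ) ⊗ P)`. -/
def Ind (ζ : K) (c : Fin n → Fin r) (P : Type) [AddCommGroup P] [Module K P]
    (ρ : HH K q c →ₐ[K] Module.End K P) : Type :=
  @HasQuotient.Quotient (Y K r n q ⊗[K] P) _ Submodule.hasQuotient (IndRel K r n q ζ c P ρ)

instance (ζ : K) (c : Fin n → Fin r) (P : Type) [AddCommGroup P] [Module K P]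
    (ρ : HH K q c →ₐ[K] Module.End K P) : AddCommGroup (Ind K r n q ζ c P ρ) :=
  inferInstanceAs (AddCommGroup (@HasQuotient.Quotient (Y K r n q ⊗[K] P) _ Submodule.hasQuotient (IndRel K r n q ζ c P ρ)))

instance (ζ : K) (c : Fin n → Fin r) (P : Type) [AddCommGroup P] [Module K P]
    (ρ : HH K q c →ₐ[K] Module.End K P) : Module (Y K r n q) (Ind K r n q ζ c P ρ) :=
  inferInstanceAs (Module (Y K r n q) (@HasQuotient.Quotient (Y K r n q ⊗[K] P) _ Submodule.hasQuotient (IndRel K r n q ζ c P ρ)))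

/-- The map skipping position `p`: `j ↦ j` if `j < p`, else `j ↦ j+1`
(the order embedding `Fin (n-1) → Fin n` avoiding `p`). -/
def skipIns (p : ℕ) (j : Fin (n - 1)) : Fin n :=
  if j.1 < p then ⟨j.1, by have := j.2; omega⟩ else ⟨j.1 + 1, by have := j.2; omega⟩

end YH

/-!
Since `X_{k+1} = g_k X_k g_k`, it suffices to compare the eigenvalues of `X_k` and `X_{k+1}`.
The generator `g_k` satisfies `g_k² = 1 + (q - q⁻¹) e_k g_k` with an idempotent `e_k` commuting
with `g_k`, `X_k` and `X_{k+1}`. On a common eigenvector of `X_k`, `X_{k+1}` and `e_k` this forces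
every eigenvalue of `X_{k+1}` to be an eigenvalue of `X_k` times `1`, `q²` or `q⁻²`. The inverse
`g_k - (q - q⁻¹) e_k` satisfies the same relation with `q⁻¹` in place of `q`, so the argument runs
in both directions, and integrality spreads from `X_i` to all `X_k`.
-/

open Finset

section Monoid

variable {M : Type*} [Monoid M] {r : ℕ}

lemma pow_sub_mod_eq_pow_pred_pow {x : M} (hx : x ^ r = 1) {s : ℕ} (hs : s ≤ r) :
    x ^ ((r - s) % r) = (x ^ (r - 1)) ^ s := by
  rcases r with _ | r
  · simp [Nat.le_zero.mp hs]
  rw [← pow_eq_pow_mod _ hx]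
  refine left_inv_eq_right_inv (a := x ^ s) ?_ ?_
  · rw [← pow_add, Nat.sub_add_cancel hs, hx]
  · rw [Nat.add_sub_cancel, ← ((Commute.refl x).pow_right r).mul_pow, ← pow_succ', hx, one_pow]

lemma mul_pow_pred_pow_eq_one {x y : M} (hxy : Commute x y) (hx : x ^ r = 1) (hy : y ^ r = 1) :
    (x * y ^ (r - 1)) ^ r = 1 := by
  rw [(hxy.pow_right _).mul_pow, hx, ← pow_mul, mul_comm, pow_mul, hy, one_pow, one_mul]

lemma mul_pow_pred_mul_mul_pow_pred (hr : r ≠ 0) {x y : M} (hx : x ^ r = 1) (hy : y ^ r = 1) :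
    x * y ^ (r - 1) * (y * x ^ (r - 1)) = 1 := by
  rw [mul_assoc, ← mul_assoc (y ^ (r - 1)), pow_sub_one_mul hr, hy, one_mul, mul_pow_sub_one hr,
    hx]

lemma braid_conj {g h x : M} (hhx : Commute h x) (hbr : g * h * g = h * g * h)
    (hgx : g * x * g * x = x * g * x * g) :
    h * (g * x * g) * h * (g * x * g) = g * x * g * h * (g * x * g) * h := by
  have hbr₀ : g * (h * g) = h * (g * h) := by simp only [← mul_assoc, hbr]
  have hbr₁ (y : M) : g * (h * (g * y)) = h * (g * (h * y)) := by simp only [← mul_assoc, hbr]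
  have hhx₁ (y : M) : h * (x * y) = x * (h * y) := by rw [← mul_assoc, hhx.eq, mul_assoc]
  have hgx₁ (y : M) : g * (x * (g * (x * y))) = x * (g * (x * (g * y))) := by
    simp only [← mul_assoc, hgx]
  simp only [mul_assoc]
  conv_lhs =>
    rw [hbr₁ (x * g), ← hhx₁ (g * (h * (x * g))), hhx₁ g, ← hbr₁ (x * (g * (x * (h * g)))),
      hgx₁ (h * g), hbr₀, hhx₁ (g * (x * (h * (g * h))))]
  conv_rhs => rw [hbr₁ (x * (g * h)), hhx₁ (g * h)]

end Monoid

section GeomSum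

lemma geom_sum_mul_eq_nsmul {R : Type*} [Semiring R] {r : ℕ} {x y : R} (hyx : y * x = x) :
    (∑ s ∈ range r, y ^ s) * x = r • x := by
  have hpow (s : ℕ) : y ^ s * x = x := by
    induction s with
    | zero => rw [pow_zero, one_mul]
    | succ s ih => rw [pow_succ, mul_assoc, hyx, ih]
  rw [sum_mul, sum_congr rfl fun s _ => hpow s, sum_const, card_range]

variable {R : Type*} [Ring R] {r : ℕ}

lemma mul_geom_sum_eq_self {z : R} (hz : z ^ r = 1) :
    z * ∑ s ∈ range r, z ^ s = ∑ s ∈ range r, z ^ s := by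
  have h := mul_geom_sum z r
  rwa [hz, sub_self, sub_mul, one_mul, sub_eq_zero] at h

variable {K : Type*} [Field K] [Algebra K R]

lemma isIdempotentElem_inv_smul_geom_sum (hr : (r : K) ≠ 0) {z : R} (hz : z ^ r = 1) :
    IsIdempotentElem ((r : K)⁻¹ • ∑ s ∈ range r, z ^ s) := by
  rw [IsIdempotentElem, smul_mul_smul_comm, geom_sum_mul_eq_nsmul (mul_geom_sum_eq_self hz),
    ← Nat.cast_smul_eq_nsmul K, smul_smul, mul_assoc, inv_mul_cancel₀ hr, mul_one]

/-- Each of the two geometric sums absorbs the other one, which forces them to be equal. -/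
lemma geom_sum_eq_geom_sum_of_mul_eq_one (hr : (r : K) ≠ 0) {z w : R} (hz : z ^ r = 1)
    (hw : w ^ r = 1) (hwz : w * z = 1) (hzw : z * w = 1) :
    ∑ s ∈ range r, w ^ s = ∑ s ∈ range r, z ^ s := by
  have absorb {x y : R} (hx : x ^ r = 1) (hyx : y * x = 1) :
      (∑ s ∈ range r, y ^ s) * ∑ s ∈ range r, x ^ s = (r : K) • ∑ s ∈ range r, x ^ s := by
    rw [Nat.cast_smul_eq_nsmul, geom_sum_mul_eq_nsmul]
    conv_lhs => rw [← mul_geom_sum_eq_self hx, ← mul_assoc, hyx, one_mul]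
  have hcomm : Commute (∑ s ∈ range r, w ^ s) (∑ s ∈ range r, z ^ s) :=
    Commute.sum_left _ _ _ fun i _ => Commute.sum_right _ _ _ fun j _ =>
      (show Commute w z from hwz.trans hzw.symm).pow_pow i j
  have h := absorb hw hzw
  rw [← hcomm.eq, absorb hz hwz] at h
  exact (smul_right_injective R hr h).symm

end GeomSum

/-- The quadratic relation of the generators `g_i` of `Ŷ_{r,n}`, with `e = e_i`. -/
structure IsHeckeGenerator {K R : Type*} [Field K] [Ring R] [Algebra K R] (q : K) (e g : R) :
    Prop where
  isIdempotentElem : IsIdempotentElem e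
  commute : Commute e g
  mul_self : g * g = 1 + (q - q⁻¹) • (e * g)

namespace IsHeckeGenerator

variable {K R S : Type*} [Field K] [Ring R] [Algebra K R] [Ring S] [Algebra K S]
  {q : K} {e g : R}

lemma map (h : IsHeckeGenerator q e g) (f : R →ₐ[K] S) : IsHeckeGenerator q (f e) (f g) where
  isIdempotentElem := h.isIdempotentElem.map f
  commute := h.commute.map f
  mul_self := by rw [← map_mul, h.mul_self, map_add, map_one, map_smul, map_mul]

lemma inverse_mul (h : IsHeckeGenerator q e g) : (g - (q - q⁻¹) • e) * g = 1 := by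
  rw [sub_mul, smul_mul_assoc, h.mul_self, add_sub_cancel_right]

lemma mul_inverse (h : IsHeckeGenerator q e g) : g * (g - (q - q⁻¹) • e) = 1 := by
  rw [mul_sub, mul_smul_comm, h.mul_self, h.commute.eq, add_sub_cancel_right]

lemma inverse (h : IsHeckeGenerator q e g) : IsHeckeGenerator q⁻¹ e (g - (q - q⁻¹) • e) where
  isIdempotentElem := h.isIdempotentElem
  commute := h.commute.sub_right ((Commute.refl e).smul_right _)
  mul_self := by
    have he : e * e = e := h.isIdempotentElem
    rw [inv_inv, mul_sub, sub_mul, sub_mul, h.mul_self, mul_smul_comm, smul_mul_assoc,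
      smul_mul_assoc, mul_smul_comm, he, ← h.commute.eq, mul_sub, mul_smul_comm, he, smul_sub]
    match_scalars <;> ring

lemma inverse_conj {a b : R} (h : IsHeckeGenerator q e g) (hab : g * a * g = b) :
    (g - (q - q⁻¹) • e) * b * (g - (q - q⁻¹) • e) = a := by
  rw [← hab, ← mul_assoc, ← mul_assoc, h.inverse_mul, one_mul, mul_assoc, h.mul_inverse, mul_one]

end IsHeckeGenerator

lemma exists_sq_eq_zpow_of_sq_eq_one_add {K : Type*} [Field K] {q ε c : K} (hq : q ≠ 0)
    (hε : IsIdempotentElem ε) (hc : c ^ 2 = 1 + (q - q⁻¹) * ε * c) : ∃ m : ℤ, c ^ 2 = q ^ m := by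
  rcases IsIdempotentElem.iff_eq_zero_or_one.mp hε with rfl | rfl
  · exact ⟨0, by simpa using hc⟩
  have hqq : q * q⁻¹ = 1 := mul_inv_cancel₀ hq
  have hroots : (c - q) * (c + q⁻¹) = 0 := by linear_combination hc - hqq
  rcases mul_eq_zero.mp hroots with h | h
  · exact ⟨2, by rw [sub_eq_zero.mp h]; norm_cast⟩
  · exact ⟨-2, by rw [eq_neg_of_add_eq_zero_left h, zpow_neg]; norm_num⟩

namespace Module.End

variable {K V : Type*} [Field K] [AddCommGroup V] [Module K V]

def EigenvaluesInZPowers (q : K) (f : End K V) : Prop :=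
  ∀ a : K, f.HasEigenvalue a → ∃ m : ℤ, a = q ^ m

lemma hasEigenvalue_of_apply_eq_smul_add_smul {f : End K V} {u v : V} {a b c : K} (hv : v ≠ 0)
    (hfv : f v = b • v) (hfu : f u = a • u + c • v) (hu : u ∉ K ∙ v) : f.HasEigenvalue a := by
  by_cases hab : a = b
  · subst hab
    exact hasEigenvalue_of_hasEigenvector ⟨mem_eigenspace_iff.mpr hfv, hv⟩
  have hw : (b - a) • u - c • v ≠ 0 := by
    intro h0
    refine hu (Submodule.mem_span_singleton.mpr ⟨(b - a)⁻¹ * c, ?_⟩)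
    rw [mul_smul, ← sub_eq_zero.mp h0, smul_smul, inv_mul_cancel₀ (sub_ne_zero.mpr (Ne.symm hab)),
      one_smul]
  refine hasEigenvalue_of_hasEigenvector ⟨mem_eigenspace_iff.mpr ?_, hw⟩
  rw [map_sub, map_smul, map_smul, hfu, hfv]
  module

variable [FiniteDimensional K V] [IsAlgClosed K]

lemma exists_hasEigenvector_mem_of_mapsTo (f : End K V) {W : Submodule K V} (hW : W ≠ ⊥)
    (hfW : ∀ x ∈ W, f x ∈ W) : ∃ μ : K, ∃ v ∈ W, f.HasEigenvector μ v := by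
  have : Nontrivial W := Submodule.nontrivial_iff_ne_bot.mpr hW
  obtain ⟨μ, hμ⟩ := exists_eigenvalue (f.restrict hfW)
  obtain ⟨w, hw⟩ := hμ.exists_hasEigenvector
  refine ⟨μ, w, w.2, mem_eigenspace_iff.mpr ?_, fun h0 => hw.2 (Subtype.ext h0)⟩
  exact congrArg Subtype.val (mem_eigenspace_iff.mp hw.1)

lemma exists_common_eigenvector {A B E : End K V} {a : K} (ha : B.HasEigenvalue a)
    (hAB : Commute A B) (hEA : Commute E A) (hEB : Commute E B) :
    ∃ v : V, v ≠ 0 ∧ B v = a • v ∧ (∃ ε : K, E v = ε • v) ∧ ∃ b : K, A v = b • v := by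
  obtain ⟨ε, v₁, hv₁B, hv₁E⟩ := E.exists_hasEigenvector_mem_of_mapsTo ha
    (mapsTo_genEigenspace_of_comm hEB.symm a 1)
  have hW : B.eigenspace a ⊓ E.eigenspace ε ≠ ⊥ :=
    (Submodule.ne_bot_iff _).mpr ⟨v₁, ⟨hv₁B, hv₁E.1⟩, hv₁E.2⟩
  obtain ⟨b, v, ⟨hvB, hvE⟩, hvA⟩ := A.exists_hasEigenvector_mem_of_mapsTo hW
    fun x hx => ⟨mapsTo_genEigenspace_of_comm hAB.symm a 1 hx.1,
      mapsTo_genEigenspace_of_comm hEA ε 1 hx.2⟩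
  exact ⟨v, hvA.2, mem_eigenspace_iff.mp hvB, ⟨ε, mem_eigenspace_iff.mp hvE⟩, b,
    mem_eigenspace_iff.mp hvA.1⟩

end Module.End

namespace IsHeckeGenerator

open Module End

variable {K V : Type*} [Field K] [IsAlgClosed K] [AddCommGroup V] [Module K V]
  [FiniteDimensional K V] {q : K} {A B E G : End K V}

/-- Take a common eigenvector `v` of `A`, `B`, `E`. If `G v` is a multiple `c v` then
`B v = G A G v = c² b v`, and the quadratic relation pins `c²` down to `1, q², q⁻²`; otherwise
`A` acts triangularly on the plane spanned by `v` and `G v`, with `a` on the diagonal. -/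
theorem exists_hasEigenvalue_eq_mul_zpow (hG : IsHeckeGenerator q E G) (hq : q ≠ 0)
    (hAB : Commute A B) (hEA : Commute E A) (hEB : Commute E B) (hGAG : G * A * G = B) {a : K}
    (ha : B.HasEigenvalue a) : ∃ b : K, A.HasEigenvalue b ∧ ∃ m : ℤ, a = b * q ^ m := by
  obtain ⟨v, hv, hBv, ⟨ε, hEv⟩, b, hAv⟩ := exists_common_eigenvector ha hAB hEA hEB
  by_cases hGv : G v ∈ K ∙ v
  · obtain ⟨c, hc⟩ := Submodule.mem_span_singleton.mp hGv
    refine ⟨b, hasEigenvalue_of_hasEigenvector ⟨mem_eigenspace_iff.mpr hAv, hv⟩, ?_⟩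
    have hε : IsIdempotentElem ε := by
      refine smul_left_injective K hv ?_
      calc (ε * ε) • v = E (E v) := by rw [hEv, map_smul, hEv, smul_smul]
        _ = ε • v := by rw [← mul_apply, hG.isIdempotentElem.eq, hEv]
    have hc2 : c ^ 2 = 1 + (q - q⁻¹) * ε * c := by
      refine smul_left_injective K hv ?_
      calc (c ^ 2) • v = (G * G) v := by rw [mul_apply, ← hc, map_smul, ← hc, smul_smul, sq]
        _ = (1 + (q - q⁻¹) * ε * c) • v := by
          rw [hG.mul_self, LinearMap.add_apply, one_apply, LinearMap.smul_apply, mul_apply, ← hc,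
            map_smul, hEv]
          module
    have hac : a = c ^ 2 * b := by
      refine smul_left_injective K hv ?_
      calc a • v = (G * A * G) v := by rw [hGAG, hBv]
        _ = (c ^ 2 * b) • v := by
          rw [mul_apply, mul_apply, ← hc, map_smul, hAv, map_smul, map_smul, ← hc, smul_smul,
            smul_smul, sq]
          ring_nf
    obtain ⟨m, hm⟩ := exists_sq_eq_zpow_of_sq_eq_one_add hq hε hc2
    exact ⟨m, by rw [hac, hm, mul_comm]⟩
  · refine ⟨a, hasEigenvalue_of_apply_eq_smul_add_smul hv hAv (c := -((q - q⁻¹) * ε * a)) ?_ hGv,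
      0, by rw [zpow_zero, mul_one]⟩
    have hAG : A * G = (G - (q - q⁻¹) • E) * B := by
      rw [← hGAG, ← mul_assoc, ← mul_assoc, hG.inverse_mul, one_mul]
    calc A (G v) = ((G - (q - q⁻¹) • E) * B) v := by rw [← hAG, mul_apply]
      _ = a • G v + -((q - q⁻¹) * ε * a) • v := by
          rw [mul_apply, hBv, map_smul, LinearMap.sub_apply, LinearMap.smul_apply, hEv]
          module

theorem eigenvaluesInZPowers_iff (hG : IsHeckeGenerator q E G) (hq : q ≠ 0)
    (hAB : Commute A B) (hEA : Commute E A) (hEB : Commute E B) (hGAG : G * A * G = B) :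
    EigenvaluesInZPowers q A ↔ EigenvaluesInZPowers q B := by
  constructor
  · intro hA a ha
    obtain ⟨b, hb, m, rfl⟩ := hG.exists_hasEigenvalue_eq_mul_zpow hq hAB hEA hEB hGAG ha
    obtain ⟨k, rfl⟩ := hA b hb
    exact ⟨k + m, (zpow_add₀ hq k m).symm⟩
  · intro hB a ha
    obtain ⟨b, hb, m, rfl⟩ := hG.inverse.exists_hasEigenvalue_eq_mul_zpow (inv_ne_zero hq)
      hAB.symm hEB hEA (hG.inverse_conj hGAG) ha
    obtain ⟨k, rfl⟩ := hB b hb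
    exact ⟨k - m, by rw [inv_zpow', ← zpow_add₀ hq, sub_eq_add_neg]⟩

end IsHeckeGenerator

namespace YH

section Relations

variable {K : Type} [Field K] {r n : ℕ} {q : K}

lemma mkY_rel {x y : FY K n} (h : YRel K r n q x y) : mkY K r n q x = mkY K r n q y :=
  RingQuot.mkAlgHom_rel K h

lemma semiconjBy_g_t (i : ℕ) (hi : i + 1 < n) (j : Fin n) :
    SemiconjBy (g K r n q i hi) (t K r n q j) (t K r n q (swapi n i hi j)) := by
  simpa [SemiconjBy, g, t, mkY, gF, tF] using mkY_rel (YRel.gt (q := q) (r := r) hi j)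

lemma commute_t_t (i j : Fin n) : Commute (t K r n q i) (t K r n q j) := by
  simpa [Commute, SemiconjBy, t, mkY, tF] using mkY_rel (YRel.tt (q := q) (r := r) i j)

lemma t_pow_r (j : Fin n) : t K r n q j ^ r = 1 := by
  simpa [t, mkY, tF] using mkY_rel (YRel.tr (q := q) j)

lemma g_mul_self (i : ℕ) (hi : i + 1 < n) :
    g K r n q i hi * g K r n q i hi = 1 + (q - q⁻¹) • (e K r n q i hi * g K r n q i hi) := by
  simpa [g, e, mkY, gF] using mkY_rel (YRel.gsq (q := q) (r := r) hi)

lemma g_X1_g_X1 (h : 1 < n) :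
    g K r n q 0 (by omega) * X1 K r n q * g K r n q 0 (by omega) * X1 K r n q
      = X1 K r n q * g K r n q 0 (by omega) * X1 K r n q * g K r n q 0 (by omega) := by
  simpa [g, X1, mkY, gF, X1F] using mkY_rel (YRel.gXgX (q := q) (r := r) h)

lemma commute_g_X1 (i : ℕ) (hi : i + 1 < n) (h1 : 1 ≤ i) :
    Commute (g K r n q i hi) (X1 K r n q) := by
  simpa [Commute, SemiconjBy, g, X1, mkY, gF, X1F] using mkY_rel (YRel.gX (q := q) (r := r) hi h1)

lemma commute_t_X1 (j : Fin n) : Commute (t K r n q j) (X1 K r n q) := by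
  simpa [Commute, SemiconjBy, t, X1, mkY, tF, X1F] using mkY_rel (YRel.tX (q := q) (r := r) j)

lemma commute_g_g {i j : ℕ} (hi : i + 1 < n) (hj : j + 1 < n) (hij : i + 2 ≤ j ∨ j + 2 ≤ i) :
    Commute (g K r n q i hi) (g K r n q j hj) := by
  simpa [Commute, SemiconjBy, g, mkY, gF] using mkY_rel (YRel.gg (q := q) (r := r) hi hj hij)

lemma g_mul_g_mul_g {i : ℕ} (h : i + 2 < n) :
    g K r n q i (by omega) * g K r n q (i + 1) h * g K r n q i (by omega)
      = g K r n q (i + 1) h * g K r n q i (by omega) * g K r n q (i + 1) h := by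
  simpa [g, mkY, gF] using mkY_rel (YRel.braid (q := q) (r := r) h)

end Relations

section Commutation

variable {K : Type} [Field K] {r n : ℕ} {q : K}

lemma commute_t_Xrec (m : ℕ) (hm : m < n) (j : Fin n) :
    Commute (t K r n q j) (Xrec K r n q m hm) := by
  induction m generalizing j with
  | zero => exact commute_t_X1 j
  | succ m ih =>
    have hm' : m + 1 < n := hm
    have hg := semiconjBy_g_t (K := K) (r := r) (q := q) m hm' j
    have hg' : SemiconjBy (g K r n q m hm') (t K r n q (swapi n m hm' j)) (t K r n q j) := by
      simpa [swapi] using semiconjBy_g_t (K := K) (r := r) (q := q) m hm' (swapi n m hm' j)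
    have hgXg := hg'.mul_left (SemiconjBy.mul_left (ih (by omega) _).symm hg)
    rw [← mul_assoc] at hgXg
    exact hgXg.symm

lemma commute_g_Xrec (j : ℕ) (hj : j < n) (i : ℕ) (hi : i + 1 < n) (hji : j + 1 ≤ i) :
    Commute (g K r n q i hi) (Xrec K r n q j hj) := by
  induction j with
  | zero => exact commute_g_X1 i hi hji
  | succ j ih =>
    have hgg := commute_g_g (K := K) (r := r) (q := q) hi (by omega : j + 1 < n)
      (Or.inr (by omega))
    exact (hgg.mul_right (ih (by omega) (by omega))).mul_right hgg

lemma g_Xrec_g_Xrec (k : ℕ) (hk : k + 1 < n) :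
    g K r n q k hk * Xrec K r n q k (by omega) * g K r n q k hk * Xrec K r n q k (by omega)
      = Xrec K r n q k (by omega) * g K r n q k hk * Xrec K r n q k (by omega) *
          g K r n q k hk := by
  induction k with
  | zero => exact g_X1_g_X1 hk
  | succ k ih =>
    exact braid_conj (commute_g_Xrec k (by omega) (k + 1) hk (by omega)) (g_mul_g_mul_g hk)
      (ih (by omega))

lemma commute_Xrec_Xrec_succ (k : ℕ) (hk : k + 1 < n) :
    Commute (Xrec K r n q k (by omega)) (Xrec K r n q (k + 1) hk) := by
  have h := g_Xrec_g_Xrec (K := K) (r := r) (q := q) k hk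
  show _ * (g K r n q k hk * _ * g K r n q k hk) = (g K r n q k hk * _ * g K r n q k hk) * _
  simp only [mul_assoc] at h ⊢
  exact h.symm

/-- `e_i` is the average of the powers of `t_i t_{i+1}⁻¹`. -/
lemma e_eq_inv_smul_geom_sum (i : ℕ) (hi : i + 1 < n) :
    e K r n q i hi = (r : K)⁻¹ • ∑ s ∈ range r,
      (t K r n q ⟨i, by omega⟩ * t K r n q ⟨i + 1, hi⟩ ^ (r - 1)) ^ s := by
  have he : e K r n q i hi = (r : K)⁻¹ • ∑ s ∈ range r,
      t K r n q ⟨i, by omega⟩ ^ s * t K r n q ⟨i + 1, hi⟩ ^ ((r - s) % r) := by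
    simp [e, eF, mkY, t, tF]
  rw [he]
  refine congrArg _ (sum_congr rfl fun s hs => ?_)
  rw [((commute_t_t _ _).pow_right _).mul_pow,
    pow_sub_mod_eq_pow_pred_pow (t_pow_r _) (mem_range.mp hs).le]

lemma commute_e_Xrec (i : ℕ) (hi : i + 1 < n) (m : ℕ) (hm : m < n) :
    Commute (e K r n q i hi) (Xrec K r n q m hm) := by
  rw [e_eq_inv_smul_geom_sum]
  exact (Commute.sum_left _ _ _ fun s _ => ((commute_t_Xrec m hm _).mul_left
    ((commute_t_Xrec m hm _).pow_left _)).pow_left s).smul_left _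

end Commutation

lemma isHeckeGenerator_e_g {K : Type} [Field K] {r n : ℕ} {q : K} (hrK : (r : K) ≠ 0) (i : ℕ)
    (hi : i + 1 < n) : IsHeckeGenerator q (e K r n q i hi) (g K r n q i hi) := by
  have hr : r ≠ 0 := by rintro rfl; exact hrK Nat.cast_zero
  set a := t K r n q ⟨i, by omega⟩
  set b := t K r n q ⟨i + 1, hi⟩
  have hab : Commute a b := commute_t_t _ _
  have hz := mul_pow_pred_pow_eq_one hab (t_pow_r _) (t_pow_r _)
  have hw := mul_pow_pred_pow_eq_one hab.symm (t_pow_r _) (t_pow_r _)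
  have hga : SemiconjBy (g K r n q i hi) a b := by
    simpa [swapi] using semiconjBy_g_t (K := K) (r := r) (q := q) i hi ⟨i, by omega⟩
  have hgb : SemiconjBy (g K r n q i hi) b a := by
    simpa [swapi] using semiconjBy_g_t (K := K) (r := r) (q := q) i hi ⟨i + 1, hi⟩
  have hsum : SemiconjBy (g K r n q i hi) (∑ s ∈ range r, (a * b ^ (r - 1)) ^ s)
      (∑ s ∈ range r, (b * a ^ (r - 1)) ^ s) := by
    rw [SemiconjBy, mul_sum, sum_mul]
    exact sum_congr rfl fun s _ => ((hga.mul_right (hgb.pow_right _)).pow_right s).eq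
  rw [geom_sum_eq_geom_sum_of_mul_eq_one hrK hz hw
    (mul_pow_pred_mul_mul_pow_pred hr (t_pow_r _) (t_pow_r _))
    (mul_pow_pred_mul_mul_pow_pred hr (t_pow_r _) (t_pow_r _))] at hsum
  refine ⟨?_, ?_, g_mul_self i hi⟩ <;> rw [e_eq_inv_smul_geom_sum]
  · exact isIdempotentElem_inv_smul_geom_sum hrK hz
  · exact (Commute.symm hsum).smul_left _

section Integrality

open Module End

variable {K : Type} [Field K] [IsAlgClosed K] {r n : ℕ} {q : K} (M : Type) [AddCommGroup M]
  [Module K M] [Module (Y K r n q) M] [IsScalarTower K (Y K r n q) M] [FiniteDimensional K M]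

lemma eigenvaluesInZPowers_Xrec_succ_iff (hrK : (r : K) ≠ 0) (hq : q ≠ 0) (k : ℕ)
    (hk : k + 1 < n) :
    EigenvaluesInZPowers q (actHom K (Y K r n q) M (Xrec K r n q k (by omega))) ↔
      EigenvaluesInZPowers q (actHom K (Y K r n q) M (Xrec K r n q (k + 1) hk)) :=
  ((isHeckeGenerator_e_g hrK k hk).map _).eigenvaluesInZPowers_iff hq
    ((commute_Xrec_Xrec_succ k hk).map _) ((commute_e_Xrec k hk k _).map _)
    ((commute_e_Xrec k hk (k + 1) hk).map _) (by rw [← map_mul, ← map_mul]; rfl)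

lemma eigenvaluesInZPowers_Xrec_iff_X1 (hrK : (r : K) ≠ 0) (hq : q ≠ 0) (k : ℕ) (hk : k < n) :
    EigenvaluesInZPowers q (actHom K (Y K r n q) M (Xrec K r n q k hk)) ↔
      EigenvaluesInZPowers q (actHom K (Y K r n q) M (X1 K r n q)) := by
  induction k with
  | zero => rfl
  | succ k ih => exact (eigenvaluesInZPowers_Xrec_succ_iff M hrK hq k hk).symm.trans (ih _)

end Integrality

end YH

theorem statement16_general (K : Type) [Field K] [IsAlgClosed K] (r n : ℕ)
    (hrK : (r : K) ≠ 0) (q : K) (hq : q ≠ 0)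
    (M : Type) [AddCommGroup M] [Module K M] [Module (YH.Y K r n q) M]
    [IsScalarTower K (YH.Y K r n q) M] [FiniteDimensional K M]
    (i : Fin n)
    (h : ∀ a : K,
      Module.End.HasEigenvalue
        (YH.actHom K (YH.Y K r n q) M (YH.X K r n q i)) a → ∃ m : ℤ, a = q ^ m) :
    ∀ (k : Fin n) (a : K),
      Module.End.HasEigenvalue
        (YH.actHom K (YH.Y K r n q) M (YH.X K r n q k)) a → ∃ m : ℤ, a = q ^ m := by
  intro k
  exact (YH.eigenvaluesInZPowers_Xrec_iff_X1 M hrK hq k k.2).mpr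
    ((YH.eigenvaluesInZPowers_Xrec_iff_X1 M hrK hq i i.2).mp h)

/-- Lemma 5.2 of the paper: if for some fixed `i` all
eigenvalues of `X_i` on a finite-dimensional `Ŷ_{r,n}^K`-module `M` lie in
`I = {qᵐ : m ∈ ℤ}`, then `M` is integral, i.e. all eigenvalues of every `X_k`
on `M` lie in `I`. -/
theorem statement16 (K : Type) [Field K] [IsAlgClosed K] (r n : ℕ) (hr : 0 < r) (hn : 0 < n)
    (hrK : (r : K) ≠ 0) (q : K) (hq : q ≠ 0)
    (M : Type) [AddCommGroup M] [Module K M] [Module (YH.Y K r n q) M]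
    [IsScalarTower K (YH.Y K r n q) M] [FiniteDimensional K M]
    (i : Fin n)
    (h : ∀ a : K,
      Module.End.HasEigenvalue
        (YH.actHom K (YH.Y K r n q) M (YH.X K r n q i)) a → ∃ m : ℤ, a = q ^ m) :
    ∀ (k : Fin n) (a : K),
      Module.End.HasEigenvalue
        (YH.actHom K (YH.Y K r n q) M (YH.X K r n q k)) a → ∃ m : ℤ, a = q ^ m :=
  statement16_general K r n hrK q hq M i h
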